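/- At the interior equilibrium (ρ₁*, ρ₂*) with (ρ₁*)² = (λ₁ − θλ₂)/((θδ−1)a) and (ρ₂*)² = (λ₂ − δλ₁)/((θδ−1)d), the Jacobian of the vector field (λ₁ρ₁ + ρ₁(aρ₁² + bρ₂²), λ₂ρ₂ + ρ₂(cρ₁² + dρ₂²)) has determinant −4(λ₂ − δλ₁)(λ₁ − θλ₂)/(θδ − 1). -/

import Mathlib

/-! At the interior equilibrium the linear terms cancel the cubic ones, `λ₁ = -(aρ₁² + bρ₂²)` and
`λ₂ = -(cρ₁² + dρ₂²)`, so the Jacobian reduces to `2 [[aρ₁², bρ₁ρ₂], [cρ₁ρ₂, dρ₂²]]`. With `b = θd`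
and `c = δa` its determinant is `4 (aρ₁²)(dρ₂²)(1 - θδ)`, and `aρ₁²`, `dρ₂²` are read off the
equilibrium formulas. -/

open ContinuousLinearMap

theorem det_prod_smul_fst_add_smul_snd {R : Type*} [CommRing R] [TopologicalSpace R]
    [IsTopologicalRing R] (p q r s : R) :
    LinearMap.det (((p • fst R R R + q • snd R R R).prod
      (r • fst R R R + s • snd R R R) : R × R →L[R] R × R) : R × R →ₗ[R] R × R)
      = p * s - q * r := by
  rw [← LinearMap.det_toMatrix (Module.Basis.finTwoProd R), Matrix.det_fin_two]
  simp [LinearMap.toMatrix_apply, Module.Basis.finTwoProd]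

theorem hasFDerivAt_doubleHopf_radial (lam₁ lam₂ a b c d x y : ℝ) :
    HasFDerivAt (fun p : ℝ × ℝ =>
      (lam₁ * p.1 + p.1 * (a * p.1 ^ 2 + b * p.2 ^ 2),
       lam₂ * p.2 + p.2 * (c * p.1 ^ 2 + d * p.2 ^ 2)))
      (((lam₁ + 3 * a * x ^ 2 + b * y ^ 2) • fst ℝ ℝ ℝ + (2 * b * x * y) • snd ℝ ℝ ℝ).prod
        ((2 * c * x * y) • fst ℝ ℝ ℝ + (lam₂ + c * x ^ 2 + 3 * d * y ^ 2) • snd ℝ ℝ ℝ))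
      (x, y) := by
  have h₁ : HasFDerivAt (fun p : ℝ × ℝ => p.1) (fst ℝ ℝ ℝ) (x, y) := hasFDerivAt_fst
  have h₂ : HasFDerivAt (fun p : ℝ × ℝ => p.2) (snd ℝ ℝ ℝ) (x, y) := hasFDerivAt_snd
  refine (((h₁.const_mul lam₁).add
      (h₁.mul (((h₁.pow 2).const_mul a).add ((h₂.pow 2).const_mul b)))).prodMk
    ((h₂.const_mul lam₂).add
      (h₂.mul (((h₁.pow 2).const_mul c).add ((h₂.pow 2).const_mul d))))).congr_fderiv ?_
  ext <;> simp <;> ring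

theorem double_hopf_interior_jacobian_det_general (lam₁ lam₂ a b c d : ℝ)
    (ha : a ≠ 0) (hd : d ≠ 0)
    (δ θ : ℝ) (hδ : δ = c / a) (hθ : θ = b / d) (hθδ : θ * δ ≠ 1)
    (ρ₁ ρ₂ : ℝ)
    (hρ₁sq : ρ₁ ^ 2 = (lam₁ - θ * lam₂) / ((θ * δ - 1) * a))
    (hρ₂sq : ρ₂ ^ 2 = (lam₂ - δ * lam₁) / ((θ * δ - 1) * d))
    (F : ℝ × ℝ → ℝ × ℝ)
    (hF : F = fun p =>
      (lam₁ * p.1 + p.1 * (a * p.1 ^ 2 + b * p.2 ^ 2),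
       lam₂ * p.2 + p.2 * (c * p.1 ^ 2 + d * p.2 ^ 2))) :
    LinearMap.det ((fderiv ℝ F (ρ₁, ρ₂)).toLinearMap)
      = -4 * (lam₂ - δ * lam₁) * (lam₁ - θ * lam₂) / (θ * δ - 1) := by
  have hθδ' : θ * δ - 1 ≠ 0 := sub_ne_zero.mpr hθδ
  obtain rfl : b = θ * d := by rw [hθ, div_mul_cancel₀ b hd]
  obtain rfl : c = δ * a := by rw [hδ, div_mul_cancel₀ c ha]
  have ha₁ : (θ * δ - 1) * (a * ρ₁ ^ 2) = lam₁ - θ * lam₂ := by rw [hρ₁sq]; field_simp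
  have hd₂ : (θ * δ - 1) * (d * ρ₂ ^ 2) = lam₂ - δ * lam₁ := by rw [hρ₂sq]; field_simp
  have heq₁ : lam₁ + a * ρ₁ ^ 2 + θ * (d * ρ₂ ^ 2) = 0 :=
    mul_left_cancel₀ hθδ' (by linear_combination ha₁ + θ * hd₂)
  have heq₂ : lam₂ + δ * (a * ρ₁ ^ 2) + d * ρ₂ ^ 2 = 0 :=
    mul_left_cancel₀ hθδ' (by linear_combination δ * ha₁ + hd₂)
  subst hF
  rw [(hasFDerivAt_doubleHopf_radial ..).fderiv, det_prod_smul_fst_add_smul_snd]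
  calc _ = 4 * (a * ρ₁ ^ 2) * (d * ρ₂ ^ 2) * (1 - θ * δ) := by
        linear_combination (lam₂ + δ * a * ρ₁ ^ 2 + 3 * d * ρ₂ ^ 2) * heq₁ + 2 * a * ρ₁ ^ 2 * heq₂
    _ = _ := by
      rw [eq_div_iff hθδ']
      linear_combination (-4 * (lam₂ - δ * lam₁)) * ha₁ - 4 * (θ * δ - 1) * (a * ρ₁ ^ 2) * hd₂

/-- At the interior equilibrium of the double-Hopf radial vector field
`F(ρ₁,ρ₂) = (λ₁ρ₁ + ρ₁(aρ₁² + bρ₂²), λ₂ρ₂ + ρ₂(cρ₁² + dρ₂²))`, the Jacobian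
has determinant `-4(λ₂ - δλ₁)(λ₁ - θλ₂)/(θδ - 1)` where `δ = c/a`, `θ = b/d`. -/
theorem double_hopf_interior_jacobian_det (lam₁ lam₂ a b c d : ℝ)
    (ha : a ≠ 0) (hd : d ≠ 0)
    (δ θ : ℝ) (hδ : δ = c / a) (hθ : θ = b / d) (hθδ : θ * δ ≠ 1)
    (ρ₁ ρ₂ : ℝ) (hρ₁ : 0 < ρ₁) (hρ₂ : 0 < ρ₂)
    (hρ₁sq : ρ₁ ^ 2 = (lam₁ - θ * lam₂) / ((θ * δ - 1) * a))
    (hρ₂sq : ρ₂ ^ 2 = (lam₂ - δ * lam₁) / ((θ * δ - 1) * d))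
    (F : ℝ × ℝ → ℝ × ℝ)
    (hF : F = fun p =>
      (lam₁ * p.1 + p.1 * (a * p.1 ^ 2 + b * p.2 ^ 2),
       lam₂ * p.2 + p.2 * (c * p.1 ^ 2 + d * p.2 ^ 2))) :
    LinearMap.det ((fderiv ℝ F (ρ₁, ρ₂)).toLinearMap)
      = -4 * (lam₂ - δ * lam₁) * (lam₁ - θ * lam₂) / (θ * δ - 1) :=
  double_hopf_interior_jacobian_det_general lam₁ lam₂ a b c d ha hd δ θ hδ hθ hθδ ρ₁ ρ₂ hρ₁sq hρ₂sq
    F hF
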